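/- arXiv:0903.4045 — 2 statements merged into one kernel-verified Lean document; each statement's English description precedes it below -/
import Mathlib

section
/- Let a group G act by unitary operators on a complex Hilbert space V and let u : G → V be a 1-cocycle; for t ∈ G set s_t = p_t(u(t)), where p_t is the orthogonal projection onto the t-fixed vectors. Suppose t_0, t_1, t_2, t_3, r_1, r_2, r_3 ∈ G satisfy the relation t_0 t_1 t_2 t_3 = r_1 r_2 r_3, that each of t_1, t_2, t_3, r_1, r_2, r_3 commutes with t_0, and that ⟨s_x, s_{t_0}⟩ = 0 for every x ∈ {t_1, t_2, t_3, r_1, r_2, r_3}. Then s_{t_0} = 0. -/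
/-!
If `g` commutes with `t₀`, then `ρ g` preserves the `t₀`-fixed vectors and their orthogonal
complement, and the cocycle identity `u (g t₀) = u (t₀ g)` shows that `ρ g (u t₀) - u t₀` lies in
that complement; hence `ρ g` fixes `s = p t₀ (u t₀)`. So `s` is fixed by all seven elements, and on
their stabiliser `x ↦ ⟪u x, s⟫` is additive, with `⟪u x, s⟫ = ⟪s_x, s⟫`. Evaluating it on both
sides of the lantern relation gives `⟪s, s⟫ + 0 = 0`.
-/

open scoped InnerProductSpace

section FixedVectors

variable {𝕜 V : Type*} [RCLike 𝕜] [NormedAddCommGroup V] [InnerProductSpace 𝕜 V]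

theorem inner_apply_sub_self_eq_zero_of_apply_eq_self (e : V ≃ₗᵢ[𝕜] V) (v : V) {w : V}
    (hw : e w = w) : ⟪e v - v, w⟫_𝕜 = 0 := by
  have h : ⟪e v, w⟫_𝕜 = ⟪v, w⟫_𝕜 := by
    conv_lhs => rw [← hw]
    exact e.inner_map_map v w
  rw [inner_sub_left, h, sub_self]

theorem eq_of_apply_eq_self_of_inner_sub_eq_zero (e : V ≃ₗᵢ[𝕜] V) {x y z : V}
    (hy : e y = y) (hz : e z = z)
    (hxy : ∀ w, e w = w → ⟪x - y, w⟫_𝕜 = 0) (hxz : ∀ w, e w = w → ⟪x - z, w⟫_𝕜 = 0) :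
    y = z := by
  have hfix : e (y - z) = y - z := by rw [map_sub, hy, hz]
  have h : ⟪y - z, y - z⟫_𝕜 = 0 :=
    calc ⟪y - z, y - z⟫_𝕜 = ⟪x - z, y - z⟫_𝕜 - ⟪x - y, y - z⟫_𝕜 := by
          rw [← inner_sub_left]
          congr 1
          abel
      _ = 0 := by rw [hxz _ hfix, hxy _ hfix, sub_self]
  rwa [inner_self_eq_zero, sub_eq_zero] at h

end FixedVectors

section Cocycle

variable {G 𝕜 V : Type*} [Group G] [RCLike 𝕜] [NormedAddCommGroup V] [InnerProductSpace 𝕜 V]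
  (ρ : G →* (V ≃ₗᵢ[𝕜] V)) {u : G → V}

theorem map_mul_apply (a b : G) (v : V) : ρ (a * b) v = ρ a (ρ b v) := by
  rw [map_mul]
  rfl

theorem apply_apply_eq_self_of_commute {g t : G} (h : Commute g t) {w : V} (hw : ρ t w = w) :
    ρ t (ρ g w) = ρ g w := by
  rw [← map_mul_apply, ← h.eq, map_mul_apply, hw]

theorem cocycle_apply_sub_self_of_commute (hu : ∀ a b, u (a * b) = u a + ρ a (u b))
    {g t : G} (h : Commute g t) : ρ g (u t) - u t = ρ t (u g) - u g := by
  have hgt := congrArg u h.eq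
  rw [hu, hu] at hgt
  linear_combination (norm := abel) hgt

theorem cocycle_one (hu : ∀ a b, u (a * b) = u a + ρ a (u b)) : u 1 = 0 := by
  simpa using hu 1 1

theorem apply_proj_cocycle_eq_self_of_commute {p : G → V → V}
    (hp_mem : ∀ t x, ρ t (p t x) = p t x)
    (hp_orth : ∀ t x y, ρ t y = y → ⟪x - p t x, y⟫_𝕜 = 0)
    (hu : ∀ a b, u (a * b) = u a + ρ a (u b)) {g t : G} (h : Commute g t) :
    ρ g (p t (u t)) = p t (u t) := by
  set s := p t (u t)
  refine eq_of_apply_eq_self_of_inner_sub_eq_zero (ρ t) (x := u t)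
    (apply_apply_eq_self_of_commute ρ h (hp_mem t _)) (hp_mem t _) (fun w hw => ?_)
    (hp_orth t _)
  have hw' : ρ t (ρ g⁻¹ w) = ρ g⁻¹ w := apply_apply_eq_self_of_commute ρ h.inv_left hw
  have hmoved : ⟪ρ g (u t - s), w⟫_𝕜 = 0 :=
    calc ⟪ρ g (u t - s), w⟫_𝕜 = ⟪ρ g (u t - s), ρ g (ρ g⁻¹ w)⟫_𝕜 := by
          rw [← map_mul_apply, mul_inv_cancel, map_one]
          rfl
      _ = 0 := by rw [(ρ g).inner_map_map]; exact hp_orth t (u t) _ hw'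
  calc ⟪u t - ρ g s, w⟫_𝕜 = ⟪ρ g (u t - s), w⟫_𝕜 - ⟪ρ t (u g) - u g, w⟫_𝕜 := by
        rw [← cocycle_apply_sub_self_of_commute ρ hu h, ← inner_sub_left, map_sub]
        congr 1
        abel
    _ = 0 := by rw [hmoved, inner_apply_sub_self_eq_zero_of_apply_eq_self _ _ hw, sub_self]

theorem inner_cocycle_list_prod (hu : ∀ a b, u (a * b) = u a + ρ a (u b)) {s : V} :
    ∀ l : List G, (∀ x ∈ l, ρ x s = s) →
      ⟪u l.prod, s⟫_𝕜 = (l.map fun x => ⟪u x, s⟫_𝕜).sum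
  | [], _ => by simp [cocycle_one ρ hu]
  | a :: l, hl => by
    have hmoved : ⟪ρ a (u l.prod), s⟫_𝕜 = ⟪u l.prod, s⟫_𝕜 := by
      conv_lhs => rw [← hl a List.mem_cons_self]
      exact (ρ a).inner_map_map _ _
    rw [List.prod_cons, hu, inner_add_left, hmoved,
      inner_cocycle_list_prod hu l fun x hx => hl x (List.mem_cons_of_mem a hx), List.map_cons,
      List.sum_cons]

end Cocycle

theorem lantern_relation_s_eq_zero_general
    {G V : Type*} [Group G]
    [NormedAddCommGroup V] [InnerProductSpace ℂ V]
    (ρ : G →* (V ≃ₗᵢ[ℂ] V)) (p : G → V → V)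
    (hp_mem : ∀ (t : G) (x : V), ρ t (p t x) = p t x)
    (hp_orth : ∀ (t : G) (x y : V), ρ t y = y →
      (inner ℂ (x - p t x) y : ℂ) = 0)
    (u : G → V) (hu : ∀ a b : G, u (a * b) = u a + ρ a (u b))
    (t₀ t₁ t₂ t₃ r₁ r₂ r₃ : G)
    (hrel : t₀ * t₁ * t₂ * t₃ = r₁ * r₂ * r₃)
    (hcomm : ∀ x ∈ [t₁, t₂, t₃, r₁, r₂, r₃], x * t₀ = t₀ * x)
    (horth : ∀ x ∈ [t₁, t₂, t₃, r₁, r₂, r₃],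
      (inner ℂ (p x (u x)) (p t₀ (u t₀)) : ℂ) = 0) :
    p t₀ (u t₀) = 0 := by
  set s := p t₀ (u t₀)
  have inner_eq_inner_proj : ∀ x, ρ x s = s → ⟪u x, s⟫_ℂ = ⟪p x (u x), s⟫_ℂ := fun x hx =>
    sub_eq_zero.mp (by rw [← inner_sub_left]; exact hp_orth x (u x) s hx)
  have hfix : ∀ x ∈ [t₁, t₂, t₃, r₁, r₂, r₃], ρ x s = s := fun x hx =>
    apply_proj_cocycle_eq_self_of_commute ρ hp_mem hp_orth hu (hcomm x hx)
  have hzero : ∀ x ∈ [t₁, t₂, t₃, r₁, r₂, r₃], ⟪u x, s⟫_ℂ = 0 := fun x hx =>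
    (inner_eq_inner_proj x (hfix x hx)).trans (horth x hx)
  have hfix₀ : ρ t₀ s = s := hp_mem t₀ (u t₀)
  have hs : ⟪u t₀, s⟫_ℂ = ⟪s, s⟫_ℂ := inner_eq_inner_proj t₀ hfix₀
  have hself : ⟪s, s⟫_ℂ = 0 :=
    calc ⟪s, s⟫_ℂ = ⟪u [t₀, t₁, t₂, t₃].prod, s⟫_ℂ := by
          rw [inner_cocycle_list_prod ρ hu _ (List.forall_mem_cons.2 ⟨hfix₀, by simp_all⟩)]
          simp [hzero, hs]
      _ = ⟪u [r₁, r₂, r₃].prod, s⟫_ℂ := by simp only [List.prod_cons, List.prod_nil, mul_one,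
          ← mul_assoc, hrel]
      _ = 0 := by rw [inner_cocycle_list_prod ρ hu _ (by simp_all)]; simp [hzero]
  rwa [inner_self_eq_zero] at hself

/-- abstract lantern relation computation: Let a group `G` act
by unitary operators on a complex Hilbert space `V` (via
`ρ : G →* (V ≃ₗᵢ[ℂ] V)`) and let `u : G → V` be a 1-cocycle; for `t ∈ G` set
`s t = p t (u t)`, where `p t` is the orthogonal projection onto the `t`-fixed
vectors (characterized by: `p t x` is `t`-fixed and `x - p t x` is orthogonal
to every `t`-fixed vector).  Suppose `t₀ t₁ t₂ t₃ = r₁ r₂ r₃`, that each of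
`t₁, t₂, t₃, r₁, r₂, r₃` commutes with `t₀`, and that `⟨s x, s t₀⟩ = 0` for
every `x ∈ {t₁, t₂, t₃, r₁, r₂, r₃}`.  Then `s t₀ = 0`. -/
theorem lantern_relation_s_eq_zero
    {G V : Type*} [Group G]
    [NormedAddCommGroup V] [InnerProductSpace ℂ V] [CompleteSpace V]
    (ρ : G →* (V ≃ₗᵢ[ℂ] V)) (p : G → V → V)
    (hp_mem : ∀ (t : G) (x : V), ρ t (p t x) = p t x)
    (hp_orth : ∀ (t : G) (x y : V), ρ t y = y →
      (inner ℂ (x - p t x) y : ℂ) = 0)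
    (u : G → V) (hu : ∀ a b : G, u (a * b) = u a + ρ a (u b))
    (t₀ t₁ t₂ t₃ r₁ r₂ r₃ : G)
    (hrel : t₀ * t₁ * t₂ * t₃ = r₁ * r₂ * r₃)
    (hcomm : ∀ x ∈ [t₁, t₂, t₃, r₁, r₂, r₃], x * t₀ = t₀ * x)
    (horth : ∀ x ∈ [t₁, t₂, t₃, r₁, r₂, r₃],
      (inner ℂ (p x (u x)) (p t₀ (u t₀)) : ℂ) = 0) :
    p t₀ (u t₀) = 0 :=
  lantern_relation_s_eq_zero_general ρ p hp_mem hp_orth u hu t₀ t₁ t₂ t₃ r₁ r₂ r₃ hrel hcomm horth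
end

section
/- Let a group G act by unitary operators on a complex Hilbert space V and let u : G → V be a 1-cocycle. Let a, b ∈ G be commuting elements such that the element a b^{-1} acts trivially on V, the fixed subspaces V^a and V^b coincide, and p_a(u(a)) = 0 and p_b(u(b)) = 0, where p_a, p_b are the orthogonal projections onto V^a and V^b respectively. Then u(a b^{-1}) = 0. -/
/-!
Since `a b⁻¹` acts trivially, `a` and `b` act by the same operator and `u (a b⁻¹) = u a - u b`.
Commutation of `a` and `b` then makes `w = u a - u b` an `a`-fixed (hence `b`-fixed) vector,
while `p a (u a) = 0` and `p b (u b) = 0` say that `u a` and `u b` are orthogonal to all such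
vectors. So `w` is orthogonal to itself.
-/

section Cocycle

variable {G R V : Type*} [Group G] [Semiring R] [SeminormedAddCommGroup V] [Module R V]

def IsCocycle (ρ : G →* (V ≃ₗᵢ[R] V)) (u : G → V) : Prop :=
  ∀ g h : G, u (g * h) = u g + ρ g (u h)

variable {ρ : G →* (V ≃ₗᵢ[R] V)} {u : G → V}

theorem apply_eq_of_mul_inv_acts_trivially {a b : G} (htriv : ∀ x : V, ρ (a * b⁻¹) x = x)
    (x : V) : ρ a x = ρ b x := by
  simpa using htriv (ρ b x)

namespace IsCocycle

theorem add_apply_of_commute (hu : IsCocycle ρ u) {a b : G} (hcomm : a * b = b * a) :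
    u a + ρ a (u b) = u b + ρ b (u a) := by
  rw [← hu, ← hu, hcomm]

theorem map_mul_inv_of_acts_trivially (hu : IsCocycle ρ u) {a b : G}
    (htriv : ∀ x : V, ρ (a * b⁻¹) x = x) : u (a * b⁻¹) = u a - u b := by
  have h := hu (a * b⁻¹) b
  rw [inv_mul_cancel_right, htriv] at h
  exact eq_sub_of_add_eq h.symm

theorem apply_sub_eq_of_commute_of_mul_inv_acts_trivially (hu : IsCocycle ρ u) {a b : G}
    (hcomm : a * b = b * a) (htriv : ∀ x : V, ρ (a * b⁻¹) x = x) :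
    ρ a (u a - u b) = u a - u b := by
  have h := hu.add_apply_of_commute hcomm
  rw [← apply_eq_of_mul_inv_acts_trivially htriv] at h
  rw [map_sub, sub_eq_sub_iff_add_eq_add, add_comm]
  exact h.symm

end IsCocycle

end Cocycle

theorem eq_of_inner_sub_right_eq_zero {𝕜 E : Type*} [RCLike 𝕜] [NormedAddCommGroup E]
    [InnerProductSpace 𝕜 E] {x y : E} (hx : inner 𝕜 x (x - y) = 0)
    (hy : inner 𝕜 y (x - y) = 0) : x = y := by
  rw [← sub_eq_zero, ← inner_self_eq_zero (𝕜 := 𝕜), inner_sub_left, hx, hy, sub_zero]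

theorem cocycle_vanishes_on_pair_general
    {G V : Type*} [Group G]
    [NormedAddCommGroup V] [InnerProductSpace ℂ V]
    (ρ : G →* (V ≃ₗᵢ[ℂ] V)) (p : G → V → V)
    (hp_orth : ∀ (t : G) (x y : V), ρ t y = y →
      (inner ℂ (x - p t x) y : ℂ) = 0)
    (u : G → V) (hu : ∀ g h : G, u (g * h) = u g + ρ g (u h))
    (a b : G) (hcomm : a * b = b * a)
    (htriv : ∀ x : V, ρ (a * b⁻¹) x = x)
    (hfix : ∀ x : V, ρ a x = x ↔ ρ b x = x)
    (ha : p a (u a) = 0) (hb : p b (u b) = 0) :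
    u (a * b⁻¹) = 0 := by
  have hu : IsCocycle ρ u := hu
  have hwa : ρ a (u a - u b) = u a - u b :=
    hu.apply_sub_eq_of_commute_of_mul_inv_acts_trivially hcomm htriv
  have hwb : ρ b (u a - u b) = u a - u b := (hfix _).mp hwa
  have hoa := hp_orth a (u a) _ hwa
  have hob := hp_orth b (u b) _ hwb
  rw [ha, sub_zero] at hoa
  rw [hb, sub_zero] at hob
  rw [hu.map_mul_inv_of_acts_trivially htriv, eq_of_inner_sub_right_eq_zero hoa hob, sub_self]

/-- abstract vanishing on bounding pair maps: Let a group `G`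
act by unitary operators on a complex Hilbert space `V` (via
`ρ : G →* (V ≃ₗᵢ[ℂ] V)`) and let `u : G → V` be a 1-cocycle.  Let `a, b ∈ G`
be commuting elements such that `a b⁻¹` acts trivially on `V`, the fixed
subspaces `V^a` and `V^b` coincide, and `p a (u a) = 0` and `p b (u b) = 0`,
where `p a, p b` are the orthogonal projections onto `V^a`, `V^b`
(characterized by: `p t x` is `t`-fixed and `x - p t x` is orthogonal to every
`t`-fixed vector).  Then `u (a b⁻¹) = 0`. -/
theorem cocycle_vanishes_on_pair
    {G V : Type*} [Group G]
    [NormedAddCommGroup V] [InnerProductSpace ℂ V] [CompleteSpace V]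
    (ρ : G →* (V ≃ₗᵢ[ℂ] V)) (p : G → V → V)
    (hp_mem : ∀ (t : G) (x : V), ρ t (p t x) = p t x)
    (hp_orth : ∀ (t : G) (x y : V), ρ t y = y →
      (inner ℂ (x - p t x) y : ℂ) = 0)
    (u : G → V) (hu : ∀ g h : G, u (g * h) = u g + ρ g (u h))
    (a b : G) (hcomm : a * b = b * a)
    (htriv : ∀ x : V, ρ (a * b⁻¹) x = x)
    (hfix : ∀ x : V, ρ a x = x ↔ ρ b x = x)
    (ha : p a (u a) = 0) (hb : p b (u b) = 0) :
    u (a * b⁻¹) = 0 :=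
  cocycle_vanishes_on_pair_general ρ p hp_orth u hu a b hcomm htriv hfix ha hb
end
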